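/- Let 𝓗 be a finite intersecting hypergraph on a finite set V, i.e., H ∩ H' ≠ ∅ for all H, H' ∈ 𝓗. Then 𝓖_𝓗(x) = 𝓣_𝓗(x) for all positions x ∈ ℕ^V; in particular 𝓗 is a Tetris hypergraph. -/
import Mathlib


/-- The minimum excludant of a set of natural numbers. -/
noncomputable def mex (S : Set ℕ) : ℕ := sInf {n : ℕ | n ∉ S}

open Classical in
/-- The Sprague–Grundy function of the impartial game with move relation `move`
(meaningful when every play is finite, i.e. the reversed move relation is
well-founded): it satisfies `sgFun move x = mex {sgFun move y | move x y}`. -/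
noncomputable def sgFun {X : Type*} (move : X → X → Prop) : X → ℕ :=
  if hwf : WellFounded (fun y x => move x y) then
    hwf.fix (fun x ih => mex {v : ℕ | ∃ (y : X) (h : move x y), ih y h = v})
  else fun _ => 0

open Classical in
/-- The Tetris function: the length of a longest play starting at `x`
(meaningful when every play is finite and the game is finitely branching):
it satisfies `tetrisFun move x = sup {tetrisFun move y + 1 | move x y}`. -/
noncomputable def tetrisFun {X : Type*} (move : X → X → Prop) : X → ℕ :=
  if hwf : WellFounded (fun y x => move x y) then
    hwf.fix (fun x ih => sSup {v : ℕ | ∃ (y : X) (h : move x y), v = ih y h + 1})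
  else fun _ => 0

/-- A game is SG decreasing if every move strictly decreases the SG value. -/
def SGDecreasing {X : Type*} (move : X → X → Prop) : Prop :=
  ∀ x y, move x y → sgFun move y < sgFun move x

/-- The move relation of the game `NIM_𝓗` on positions `ℕ^V`. -/
def nimMove {V : Type*} (𝓗 : Set (Finset V)) (x x' : V → ℕ) : Prop :=
  ∃ H ∈ 𝓗, (∀ i ∈ H, x' i < x i) ∧ ∀ i ∉ H, x' i = x i

/-- A hypergraph is Tetris if `NIM_𝓗` is SG decreasing. -/
def IsTetrisHypergraph {V : Type*} (𝓗 : Set (Finset V)) : Prop :=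
  SGDecreasing (nimMove 𝓗)

/-- The move relation of the `𝓗`-combination of the games `move i`. -/
def combMove {V : Type*} {X : V → Type*} (𝓗 : Set (Finset V))
    (move : ∀ i, X i → X i → Prop) (x x' : ∀ i, X i) : Prop :=
  ∃ H ∈ 𝓗, (∀ i ∈ H, move i (x i) (x' i)) ∧ ∀ i ∉ H, x' i = x i

/-- Condition (*): every nonempty induced subhypergraph has a hyperedge
intersecting all its hyperedges. -/
def CondStar {V : Type*} [DecidableEq V] (𝓗 : Set (Finset V)) : Prop :=
  ∀ S : Finset V, (∃ H ∈ 𝓗, H ⊆ S) →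
    ∃ H ∈ 𝓗, H ⊆ S ∧ ∀ H' ∈ 𝓗, H' ⊆ S → (H ∩ H').Nonempty

section Unfold
variable {X : Type*} {move : X → X → Prop}

lemma sgFun_eq (hwf : WellFounded (fun y x => move x y)) (x : X) :
    sgFun move x = mex {v | ∃ y, move x y ∧ sgFun move y = v} := by
  have h1 : sgFun move = hwf.fix
      (fun x ih => mex {v : ℕ | ∃ (y : X) (h : move x y), ih y h = v}) := by
    unfold sgFun
    rw [dif_pos hwf]
  conv_lhs => rw [h1, WellFounded.fix_eq]
  congr 1
  ext v
  constructor
  · rintro ⟨y, h, hv⟩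
    exact ⟨y, h, by rw [h1]; exact hv⟩
  · rintro ⟨y, h, hv⟩
    exact ⟨y, h, by rw [← hv, h1]⟩

lemma tetrisFun_eq (hwf : WellFounded (fun y x => move x y)) (x : X) :
    tetrisFun move x = sSup {v | ∃ y, move x y ∧ v = tetrisFun move y + 1} := by
  have h1 : tetrisFun move = hwf.fix
      (fun x ih => sSup {v : ℕ | ∃ (y : X) (h : move x y), v = ih y h + 1}) := by
    unfold tetrisFun
    rw [dif_pos hwf]
  conv_lhs => rw [h1, WellFounded.fix_eq]
  congr 1
  ext v
  constructor
  · rintro ⟨y, h, hv⟩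
    exact ⟨y, h, by rw [h1]; exact hv⟩
  · rintro ⟨y, h, hv⟩
    exact ⟨y, h, by rw [hv, h1]⟩

end Unfold

lemma mex_eq_of {S : Set ℕ} {t : ℕ} (h1 : ∀ k < t, k ∈ S) (h2 : t ∉ S) : mex S = t := by
  unfold mex
  apply le_antisymm
  · exact Nat.sInf_le h2
  · refine le_csInf ⟨t, h2⟩ ?_
    intro n hn
    by_contra hlt
    exact hn (h1 n (by omega))

section NimAux
variable {V : Type*} [Fintype V] [DecidableEq V] {𝓗 : Set (Finset V)}

omit [Fintype V] in
lemma nim_le {x y : V → ℕ} (h : nimMove 𝓗 x y) : ∀ i, y i ≤ x i := by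
  obtain ⟨H, hH, hlt, heq⟩ := h
  intro i
  by_cases hi : i ∈ H
  · exact (hlt i hi).le
  · exact (heq i hi).le

lemma nim_sum_lt (hne : ∀ H ∈ 𝓗, H.Nonempty) {x y : V → ℕ} (h : nimMove 𝓗 x y) :
    ∑ i, y i < ∑ i, x i := by
  obtain ⟨i, hi⟩ := hne h.choose h.choose_spec.1
  exact Finset.sum_lt_sum (fun j _ => nim_le h j)
    ⟨i, Finset.mem_univ i, h.choose_spec.2.1 i hi⟩

lemma nim_wf (hne : ∀ H ∈ 𝓗, H.Nonempty) :
    WellFounded (fun y x : V → ℕ => nimMove 𝓗 x y) :=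
  Subrelation.wf (fun h => nim_sum_lt hne h)
    (InvImage.wf (fun x : V → ℕ => ∑ i, x i) Nat.lt_wfRel.wf)

lemma tetris_le_sum (hne : ∀ H ∈ 𝓗, H.Nonempty) :
    ∀ x : V → ℕ, tetrisFun (nimMove 𝓗) x ≤ ∑ i, x i := by
  intro x
  refine (nim_wf hne).induction
    (C := fun x => tetrisFun (nimMove 𝓗) x ≤ ∑ i, x i) x (fun x IH => ?_)
  have IH' : ∀ y, nimMove 𝓗 x y → tetrisFun (nimMove 𝓗) y ≤ ∑ i, y i := IH
  show tetrisFun (nimMove 𝓗) x ≤ ∑ i, x i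
  rw [tetrisFun_eq (nim_wf hne)]
  rcases Set.eq_empty_or_nonempty
      {v | ∃ y, nimMove 𝓗 x y ∧ v = tetrisFun (nimMove 𝓗) y + 1} with h | h
  · rw [h, csSup_empty]
    exact Nat.zero_le _
  · refine csSup_le h ?_
    rintro v ⟨y, hm, rfl⟩
    have h1 := IH' y hm
    have h2 := nim_sum_lt hne hm
    omega

lemma nim_bdd (hne : ∀ H ∈ 𝓗, H.Nonempty) (x : V → ℕ) :
    BddAbove {v | ∃ y, nimMove 𝓗 x y ∧ v = tetrisFun (nimMove 𝓗) y + 1} := by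
  refine ⟨∑ i, x i, ?_⟩
  rintro v ⟨y, hm, rfl⟩
  have h1 := tetris_le_sum hne y
  have h2 := nim_sum_lt hne hm
  omega

lemma tetris_move_succ_le (hne : ∀ H ∈ 𝓗, H.Nonempty) {x y : V → ℕ}
    (h : nimMove 𝓗 x y) :
    tetrisFun (nimMove 𝓗) y + 1 ≤ tetrisFun (nimMove 𝓗) x := by
  rw [tetrisFun_eq (nim_wf hne) x]
  exact le_csSup (nim_bdd hne x) ⟨y, h, rfl⟩

lemma tetris_move_lt (hne : ∀ H ∈ 𝓗, H.Nonempty) {x y : V → ℕ}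
    (h : nimMove 𝓗 x y) :
    tetrisFun (nimMove 𝓗) y < tetrisFun (nimMove 𝓗) x := by
  have := tetris_move_succ_le hne h
  omega

lemma tetris_attain (hne : ∀ H ∈ 𝓗, H.Nonempty) {x : V → ℕ}
    (h : tetrisFun (nimMove 𝓗) x ≠ 0) :
    ∃ y, nimMove 𝓗 x y ∧ tetrisFun (nimMove 𝓗) x = tetrisFun (nimMove 𝓗) y + 1 := by
  rw [tetrisFun_eq (nim_wf hne) x] at h ⊢
  have hSne : {v | ∃ y, nimMove 𝓗 x y ∧ v = tetrisFun (nimMove 𝓗) y + 1}.Nonempty := by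
    by_contra h'
    rw [Set.not_nonempty_iff_eq_empty] at h'
    rw [h', csSup_empty] at h
    exact h rfl
  obtain ⟨y, hm, hv⟩ := Nat.sSup_mem hSne (nim_bdd hne x)
  exact ⟨y, hm, hv⟩

lemma tetris_zero (hne : ∀ H ∈ 𝓗, H.Nonempty)
    (hint : ∀ H ∈ 𝓗, ∀ H' ∈ 𝓗, (H ∩ H').Nonempty) {H : Finset V} (hH : H ∈ 𝓗)
    {z : V → ℕ} (hz : ∀ i ∈ H, z i = 0) : tetrisFun (nimMove 𝓗) z = 0 := by
  rw [tetrisFun_eq (nim_wf hne) z]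
  have hempty : {v | ∃ y, nimMove 𝓗 z y ∧ v = tetrisFun (nimMove 𝓗) y + 1} = ∅ := by
    ext v
    simp only [Set.mem_setOf_eq, Set.mem_empty_iff_false, iff_false]
    rintro ⟨y, ⟨H', hH', hlt, _⟩, _⟩
    obtain ⟨j, hj⟩ := hint H hH H' hH'
    rw [Finset.mem_inter] at hj
    have h1 := hlt j hj.2
    have h2 := hz j hj.1
    omega
  rw [hempty, csSup_empty]
  rfl

lemma tetris_mono (hne : ∀ H ∈ 𝓗, H.Nonempty) :
    ∀ y z : V → ℕ, (∀ i, y i ≤ z i) →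
      tetrisFun (nimMove 𝓗) y ≤ tetrisFun (nimMove 𝓗) z := by
  intro y
  refine (nim_wf hne).induction
    (C := fun y => ∀ z : V → ℕ, (∀ i, y i ≤ z i) →
      tetrisFun (nimMove 𝓗) y ≤ tetrisFun (nimMove 𝓗) z) y (fun y IH => ?_)
  have IH' : ∀ y', nimMove 𝓗 y y' → ∀ z : V → ℕ, (∀ i, y' i ≤ z i) →
      tetrisFun (nimMove 𝓗) y' ≤ tetrisFun (nimMove 𝓗) z := IH
  intro z hyz
  by_cases h0 : tetrisFun (nimMove 𝓗) y = 0
  · omega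
  · obtain ⟨y', hm, hTy⟩ := tetris_attain hne h0
    obtain ⟨H, hH, hlt, heq⟩ := hm
    have hm' : nimMove 𝓗 y y' := ⟨H, hH, hlt, heq⟩
    have hmz : nimMove 𝓗 z (fun i => if i ∈ H then y' i else z i) := by
      refine ⟨H, hH, fun i hi => ?_, fun i hi => ?_⟩
      · simp only [hi, if_true]
        exact lt_of_lt_of_le (hlt i hi) (hyz i)
      · simp only [hi, if_false]
    have hle : ∀ i, y' i ≤ if i ∈ H then y' i else z i := by
      intro i
      by_cases hi : i ∈ H
      · simp [hi]
      · simp only [hi, if_false]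
        rw [heq i hi]
        exact hyz i
    have h1 := IH' y' hm' _ hle
    have h2 := tetris_move_succ_le hne hmz
    omega

lemma tetris_cont (hne : ∀ H ∈ 𝓗, H.Nonempty) :
    ∀ x : V → ℕ, ∀ i : V, 0 < x i →
      tetrisFun (nimMove 𝓗) x ≤
        tetrisFun (nimMove 𝓗) (Function.update x i (x i - 1)) + 1 := by
  intro x
  refine (nim_wf hne).induction
    (C := fun x => ∀ i : V, 0 < x i →
      tetrisFun (nimMove 𝓗) x ≤
        tetrisFun (nimMove 𝓗) (Function.update x i (x i - 1)) + 1) x (fun x IH => ?_)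
  have IH' : ∀ y, nimMove 𝓗 x y → ∀ i : V, 0 < y i →
      tetrisFun (nimMove 𝓗) y ≤
        tetrisFun (nimMove 𝓗) (Function.update y i (y i - 1)) + 1 := IH
  intro i hxi
  by_cases h0 : tetrisFun (nimMove 𝓗) x = 0
  · omega
  obtain ⟨y, hm, hTx⟩ := tetris_attain hne h0
  obtain ⟨H, hH, hlt, heq⟩ := hm
  have hm' : nimMove 𝓗 x y := ⟨H, hH, hlt, heq⟩
  by_cases hiH : i ∈ H
  · have hyi := hlt i hiH
    by_cases hcase : y i + 1 < x i
    · -- move from the updated position directly to y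
      have hmy : nimMove 𝓗 (Function.update x i (x i - 1)) y := by
        refine ⟨H, hH, fun j hj => ?_, fun j hj => ?_⟩
        · rcases eq_or_ne j i with rfl | hji
          · rw [Function.update_self]; omega
          · rw [Function.update_of_ne hji]; exact hlt j hj
        · have hji : j ≠ i := fun h => hj (h ▸ hiH)
          rw [Function.update_of_ne hji]; exact heq j hj
      have := tetris_move_succ_le hne hmy
      omega
    · have hyieq : y i = x i - 1 := by omega
      by_cases hy0 : y i = 0
      · -- y ≤ updated position: use monotonicity
        have hle : ∀ j, y j ≤ Function.update x i (x i - 1) j := by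
          intro j
          rcases eq_or_ne j i with rfl | hji
          · rw [Function.update_self]; omega
          · rw [Function.update_of_ne hji]; exact nim_le hm' j
        have := tetris_mono hne y _ hle
        omega
      · have hmy : nimMove 𝓗 (Function.update x i (x i - 1))
            (Function.update y i (y i - 1)) := by
          refine ⟨H, hH, fun j hj => ?_, fun j hj => ?_⟩
          · rcases eq_or_ne j i with rfl | hji
            · rw [Function.update_self, Function.update_self]; omega
            · rw [Function.update_of_ne hji, Function.update_of_ne hji]
              exact hlt j hj
          · have hji : j ≠ i := fun h => hj (h ▸ hiH)
            rw [Function.update_of_ne hji, Function.update_of_ne hji]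
            exact heq j hj
        have h1 := IH' y hm' i (by omega)
        have h2 := tetris_move_succ_le hne hmy
        omega
  · -- i ∉ H, so y i = x i > 0
    have hyi : y i = x i := heq i hiH
    have hmy : nimMove 𝓗 (Function.update x i (x i - 1))
        (Function.update y i (y i - 1)) := by
      refine ⟨H, hH, fun j hj => ?_, fun j hj => ?_⟩
      · have hji : j ≠ i := fun h => hiH (h ▸ hj)
        rw [Function.update_of_ne hji, Function.update_of_ne hji]
        exact hlt j hj
      · rcases eq_or_ne j i with rfl | hji
        · rw [Function.update_self, Function.update_self]; omega
        · rw [Function.update_of_ne hji, Function.update_of_ne hji]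
          exact heq j hj
    have h1 := IH' y hm' i (by omega)
    have h2 := tetris_move_succ_le hne hmy
    omega

lemma tetris_ivt (hne : ∀ H ∈ 𝓗, H.Nonempty)
    (hint : ∀ H ∈ 𝓗, ∀ H' ∈ 𝓗, (H ∩ H').Nonempty) (x : V → ℕ) :
    ∀ n : ℕ, ∀ z : V → ℕ, ∑ i, z i = n → nimMove 𝓗 x z →
      ∀ k, k ≤ tetrisFun (nimMove 𝓗) z →
        ∃ w, nimMove 𝓗 x w ∧ tetrisFun (nimMove 𝓗) w = k := by
  intro n
  induction n using Nat.strong_induction_on with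
  | _ n IH =>
    intro z hzn hm k hk
    rcases eq_or_lt_of_le hk with h | h
    · exact ⟨z, hm, h.symm⟩
    · obtain ⟨H, hH, hlt, heq⟩ := hm
      have hm' : nimMove 𝓗 x z := ⟨H, hH, hlt, heq⟩
      have hex : ∃ i ∈ H, 0 < z i := by
        by_contra hc
        push_neg at hc
        have hz0 : ∀ i ∈ H, z i = 0 := fun i hi => by have := hc i hi; omega
        have := tetris_zero hne hint hH hz0
        omega
      obtain ⟨i, hiH, hzi⟩ := hex
      have hmz' : nimMove 𝓗 x (Function.update z i (z i - 1)) := by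
        refine ⟨H, hH, fun j hj => ?_, fun j hj => ?_⟩
        · rcases eq_or_ne j i with rfl | hji
          · rw [Function.update_self]
            have := hlt j hiH
            omega
          · rw [Function.update_of_ne hji]
            exact hlt j hj
        · have hji : j ≠ i := fun h => hj (h ▸ hiH)
          rw [Function.update_of_ne hji]
          exact heq j hj
      have hsum : ∑ j, Function.update z i (z i - 1) j < n := by
        rw [← hzn]
        refine Finset.sum_lt_sum (fun j _ => ?_) ⟨i, Finset.mem_univ i, ?_⟩
        · rcases eq_or_ne j i with rfl | hji
          · rw [Function.update_self]; omega
          · rw [Function.update_of_ne hji]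
        · rw [Function.update_self]; omega
      have hcont := tetris_cont hne z i hzi
      exact IH _ hsum _ rfl hmz' k (by omega)

lemma sg_eq_tetris (hne : ∀ H ∈ 𝓗, H.Nonempty)
    (hint : ∀ H ∈ 𝓗, ∀ H' ∈ 𝓗, (H ∩ H').Nonempty) :
    ∀ x : V → ℕ, sgFun (nimMove 𝓗) x = tetrisFun (nimMove 𝓗) x := by
  intro x
  refine (nim_wf hne).induction
    (C := fun x => sgFun (nimMove 𝓗) x = tetrisFun (nimMove 𝓗) x) x (fun x IH => ?_)
  have IH' : ∀ y, nimMove 𝓗 x y →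
      sgFun (nimMove 𝓗) y = tetrisFun (nimMove 𝓗) y := IH
  show sgFun (nimMove 𝓗) x = tetrisFun (nimMove 𝓗) x
  rw [sgFun_eq (nim_wf hne) x]
  refine mex_eq_of (fun k hk => ?_) ?_
  · have h0 : tetrisFun (nimMove 𝓗) x ≠ 0 := by omega
    obtain ⟨y, hm, hTy⟩ := tetris_attain hne h0
    obtain ⟨w, hw, hTw⟩ := tetris_ivt hne hint x _ y rfl hm k (by omega)
    exact ⟨w, hw, by rw [IH' w hw]; exact hTw⟩
  · rintro ⟨y, hm, hGy⟩
    have := tetris_move_lt hne hm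
    rw [IH' y hm] at hGy
    omega

end NimAux

theorem stmt12 {V : Type*} [Fintype V] [DecidableEq V]
    (𝓗 : Set (Finset V)) (hne : ∀ H ∈ 𝓗, H.Nonempty)
    (hint : ∀ H ∈ 𝓗, ∀ H' ∈ 𝓗, (H ∩ H').Nonempty) :
    (∀ x : V → ℕ, sgFun (nimMove 𝓗) x = tetrisFun (nimMove 𝓗) x) ∧
      IsTetrisHypergraph 𝓗 := by
  refine ⟨sg_eq_tetris hne hint, ?_⟩
  intro x y h
  rw [sg_eq_tetris hne hint x, sg_eq_tetris hne hint y]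
  exact tetris_move_lt hne h
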